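/- With P and Q as in the L2-ALSH scheme and ‖q‖ = 1, ‖x_i‖ ≤ U < 1 for all i: for any x, y with ⟨q,x⟩ - ⟨q,y⟩ > U^{2^{m+1}}/2, we have ‖Q(q) - P(x)‖ < ‖Q(q) - P(y)‖. -/

import Mathlib

open Real RealInnerProductSpace

/-- L2-ALSH preprocessing transformation. -/
noncomputable def l2ALSH_P (m D : ℕ) (x : EuclideanSpace ℝ (Fin D)) :
    EuclideanSpace ℝ (Fin (D + m)) :=
  WithLp.toLp 2 fun j => if h : (j : ℕ) < D then x ⟨j, h⟩ else ‖x‖ ^ (2 ^ ((j : ℕ) - D + 1))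

/-- L2-ALSH query transformation. -/
noncomputable def l2ALSH_Q (m D : ℕ) (q : EuclideanSpace ℝ (Fin D)) :
    EuclideanSpace ℝ (Fin (D + m)) :=
  WithLp.toLp 2 fun j => if h : (j : ℕ) < D then q ⟨j, h⟩ else 1 / 2

/-!
The extra coordinates telescope: `∑ₖ (1/2 - r^{2^{k+1}})² = m/4 - r² + r^{2^{m+1}}`, and the `-r²` cancels the
`‖v‖²` of `‖q - v‖²`, so `‖Q q - P v‖² = 1 + m/4 - 2⟪q, v⟫ + ‖v‖^{2^{m+1}}`. The last term is
at most `U^{2^{m+1}}` for `x` and nonnegative for `y`, so a gap in inner products larger than `U^{2^{m+1}}/2`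
decides the ordering.
-/

lemma EuclideanSpace.norm_sq_eq_sum_castAdd_add_sum_natAdd {D m : ℕ}
    (w : EuclideanSpace ℝ (Fin (D + m))) :
    ‖w‖ ^ 2 = ∑ i : Fin D, w (Fin.castAdd m i) ^ 2 + ∑ k : Fin m, w (Fin.natAdd D k) ^ 2 := by
  simp only [EuclideanSpace.norm_sq_eq, Real.norm_eq_abs, sq_abs, Fin.sum_univ_add]

lemma sum_sq_half_sub_pow_two_pow (r : ℝ) (m : ℕ) :
    ∑ k : Fin m, (1 / 2 - r ^ 2 ^ ((k : ℕ) + 1)) ^ 2 = m / 4 - r ^ 2 + r ^ 2 ^ (m + 1) := by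
  have hterm (k : ℕ) : (1 / 2 - r ^ 2 ^ (k + 1)) ^ 2
      = 1 / 4 + (r ^ 2 ^ (k + 1 + 1) - r ^ 2 ^ (k + 1)) := by
    rw [pow_succ 2 (k + 1), pow_mul]; ring
  rw [Fin.sum_univ_eq_sum_range (fun k => (1 / 2 - r ^ 2 ^ (k + 1)) ^ 2),
    Finset.sum_congr rfl fun k _ => hterm k, Finset.sum_add_distrib,
    Finset.sum_range_sub (fun k => r ^ 2 ^ (k + 1))]
  simp only [Finset.sum_const, Finset.card_range, nsmul_eq_mul, zero_add, pow_one]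
  ring

section l2ALSH

variable {m D : ℕ} (q v : EuclideanSpace ℝ (Fin D))

lemma l2ALSH_Q_sub_P_castAdd (i : Fin D) :
    (l2ALSH_Q m D q - l2ALSH_P m D v) (Fin.castAdd m i) = (q - v) i := by
  simp [l2ALSH_Q, l2ALSH_P]

lemma l2ALSH_Q_sub_P_natAdd (k : Fin m) :
    (l2ALSH_Q m D q - l2ALSH_P m D v) (Fin.natAdd D k) = 1 / 2 - ‖v‖ ^ 2 ^ ((k : ℕ) + 1) := by
  simp [l2ALSH_Q, l2ALSH_P]

lemma norm_l2ALSH_Q_sub_P_sq (hq : ‖q‖ = 1) :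
    ‖l2ALSH_Q m D q - l2ALSH_P m D v‖ ^ 2 = 1 + m / 4 - 2 * ⟪q, v⟫ + ‖v‖ ^ 2 ^ (m + 1) := by
  have hhead : ∑ i : Fin D, (l2ALSH_Q m D q - l2ALSH_P m D v) (Fin.castAdd m i) ^ 2
      = ‖q - v‖ ^ 2 := by
    simp only [l2ALSH_Q_sub_P_castAdd, EuclideanSpace.norm_sq_eq, Real.norm_eq_abs, sq_abs]
  rw [EuclideanSpace.norm_sq_eq_sum_castAdd_add_sum_natAdd, hhead]
  simp only [l2ALSH_Q_sub_P_natAdd, sum_sq_half_sub_pow_two_pow, norm_sub_sq_real, hq]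
  ring

end l2ALSH

theorem l2ALSH_ordering_general (m D : ℕ) (U : ℝ)
    (q x y : EuclideanSpace ℝ (Fin D)) (hq : ‖q‖ = 1)
    (hx : ‖x‖ ≤ U)
    (hgap : ⟪q, x⟫ - ⟪q, y⟫ > U ^ (2 ^ (m + 1)) / 2) :
    ‖l2ALSH_Q m D q - l2ALSH_P m D x‖ < ‖l2ALSH_Q m D q - l2ALSH_P m D y‖ := by
  have hxU : ‖x‖ ^ 2 ^ (m + 1) ≤ U ^ 2 ^ (m + 1) := pow_le_pow_left₀ (norm_nonneg x) hx _
  have hy0 : 0 ≤ ‖y‖ ^ 2 ^ (m + 1) := by positivity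
  have hsq : ‖l2ALSH_Q m D q - l2ALSH_P m D x‖ ^ 2 < ‖l2ALSH_Q m D q - l2ALSH_P m D y‖ ^ 2 := by
    rw [norm_l2ALSH_Q_sub_P_sq q x hq, norm_l2ALSH_Q_sub_P_sq q y hq]
    linarith
  exact lt_of_pow_lt_pow_left₀ 2 (norm_nonneg _) hsq

/-- With `‖q‖ = 1` and `‖x‖, ‖y‖ ≤ U < 1`: if `⟨q,x⟩ - ⟨q,y⟩ > U^(2^(m+1))/2`
then `‖Q(q) - P(x)‖ < ‖Q(q) - P(y)‖`. -/
theorem l2ALSH_ordering (m D : ℕ) (hm : 1 ≤ m) (U : ℝ)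
    (q x y : EuclideanSpace ℝ (Fin D)) (hq : ‖q‖ = 1)
    (hx : ‖x‖ ≤ U) (hy : ‖y‖ ≤ U) (hU : U < 1)
    (hgap : ⟪q, x⟫ - ⟪q, y⟫ > U ^ (2 ^ (m + 1)) / 2) :
    ‖l2ALSH_Q m D q - l2ALSH_P m D x‖ < ‖l2ALSH_Q m D q - l2ALSH_P m D y‖ :=
  l2ALSH_ordering_general m D U q x y hq hx hgap
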